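/- Let ε₀ > 0 and let f ∈ C¹(ℝ \ [−ε, ε]) for every ε > 0 satisfy |f(x)| ≤ |x|^{−1/2} for all x ∈ ℝ and |f'(x)| ≤ C|x|^{−3/2} for all x ∈ [−ε₀, ε₀] \ {0}. Then there exists a constant C₁ depending only on C such that for all x ∈ [−ε₀/2, ε₀/2] \ {0}, the Hilbert transform satisfies |H(f)(x)| ≤ C₁/√|x|. -/

import Mathlib

/-!
Write `r = |x|` and split `{y | δ < |x - y|}` at the ball `B(x, r/2)`. Outside the ball
`|x - y| ≥ max(r, |y|)/3`, so the integrand is dominated by `3 |y|^{-1/2} / max(r, |y|)`, whose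
integral is `24 r^{-1/2}`. Inside the ball `f(x)/(x - y)` is odd about `x` and integrates to
zero over the (symmetric) truncated ball; what remains is the difference quotient
`(f(y) - f(x))/(x - y)`, bounded by the mean value theorem by `sup_B |f'| ≤ C (r/2)^{-3/2}`,
over a set of measure at most `r`.
-/

open MeasureTheory Real Filter Set

/-- `HilbertAt f x L` means the Hilbert transform `(1/π) P.V. ∫ f(y)/(x−y) dy`
exists at `x` and equals `L`, in the principal value sense. -/
def HilbertAt (f : ℝ → ℝ) (x L : ℝ) : Prop :=
  Tendsto (fun δ : ℝ => (1 / π) * ∫ y in {y : ℝ | δ < |x - y|}, f y / (x - y))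
    (nhdsWithin 0 (Ioi 0)) (nhds L)

open Metric

lemma contDiffAt_of_contDiffOn_abs_gt {f : ℝ → ℝ} {n : WithTop ℕ∞}
    (hf : ∀ ε > 0, ContDiffOn ℝ n f {x : ℝ | ε < |x|}) {y : ℝ} (hy : y ≠ 0) :
    ContDiffAt ℝ n f y :=
  (hf (|y| / 2) (by positivity)).contDiffAt
    ((isOpen_lt continuous_const continuous_abs).mem_nhds (half_lt_self (abs_pos.2 hy)))

lemma aestronglyMeasurable_of_continuousAt_of_ne_zero {f : ℝ → ℝ}
    (hf : ∀ y ≠ 0, ContinuousAt f y) : AEStronglyMeasurable f volume := by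
  have hcont : ContinuousOn f {0}ᶜ := fun y hy => (hf y hy).continuousWithinAt
  simpa only [restrict_compl_singleton] using
    hcont.aestronglyMeasurable (μ := volume) (measurableSet_singleton 0).compl

lemma integrable_comp_abs {φ : ℝ → ℝ} (hφ : IntegrableOn φ (Ioi 0)) :
    Integrable (fun y => φ |y|) := by
  have hpos : IntegrableOn (fun y => φ |y|) (Ioi 0) :=
    hφ.congr_fun (fun y hy => by rw [abs_of_pos hy]) measurableSet_Ioi
  have hneg : IntegrableOn (fun y => φ |y|) (Iic 0) := by
    have hneg_emb : MeasurableEmbedding fun y : ℝ => -y :=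
      (Homeomorph.neg ℝ).measurableEmbedding
    rw [← Measure.map_neg_eq_self (volume : Measure ℝ), hneg_emb.integrableOn_map_iff]
    simp_rw [Function.comp_def, abs_neg, neg_preimage, neg_Iic, neg_zero]
    exact Iff.mpr integrableOn_Ici_iff_integrableOn_Ioi hpos
  simpa only [Iic_union_Ioi, integrableOn_univ] using hneg.union hpos

lemma integral_Ioi_rpow_div_max {r : ℝ} (hr : 0 < r) :
    IntegrableOn (fun t => t ^ (-(1 : ℝ) / 2) / max r t) (Ioi 0) ∧
      ∫ t in Ioi 0, t ^ (-(1 : ℝ) / 2) / max r t = 4 * r ^ (-(1 : ℝ) / 2) := by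
  have h_near : EqOn (fun t => t ^ (-(1 : ℝ) / 2) / max r t)
      (fun t => t ^ (-(1 : ℝ) / 2) / r) (Ioc 0 r) := fun t ht => by
    simp only [max_eq_left ht.2]
  have h_far : EqOn (fun t => t ^ (-(1 : ℝ) / 2) / max r t)
      (fun t => t ^ (-(3 : ℝ) / 2)) (Ioi r) := fun t (ht : r < t) => by
    simp only [max_eq_right ht.le]
    rw [show -(3 : ℝ) / 2 = -(1 : ℝ) / 2 - 1 by norm_num, rpow_sub_one (hr.trans ht).ne',
      div_eq_mul_inv]
  have i_near : IntegrableOn (fun t => t ^ (-(1 : ℝ) / 2) / r) (Ioc 0 r) :=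
    ((intervalIntegrable_iff_integrableOn_Ioc_of_le hr.le).1
      (intervalIntegral.intervalIntegrable_rpow' (by norm_num))).div_const r
  have i_far : IntegrableOn (fun t => t ^ (-(3 : ℝ) / 2)) (Ioi r) :=
    integrableOn_Ioi_rpow_of_lt (by norm_num) hr
  have I_near : ∫ t in Ioc 0 r, t ^ (-(1 : ℝ) / 2) / r = 2 * r ^ (-(1 : ℝ) / 2) := by
    rw [integral_div, ← intervalIntegral.integral_of_le hr.le,
      integral_rpow (Or.inl (by norm_num)), zero_rpow (by norm_num), rpow_add_one hr.ne']
    field_simp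
    norm_num
  have I_far : ∫ t in Ioi r, t ^ (-(3 : ℝ) / 2) = 2 * r ^ (-(1 : ℝ) / 2) := by
    rw [integral_Ioi_rpow_of_lt (by norm_num) hr]
    norm_num
    ring
  rw [← Ioc_union_Ioi_eq_Ioi hr.le]
  have i_near' := i_near.congr_fun h_near.symm measurableSet_Ioc
  have i_far' := i_far.congr_fun h_far.symm measurableSet_Ioi
  refine ⟨i_near'.union i_far', ?_⟩
  rw [setIntegral_union (Ioc_disjoint_Ioi le_rfl) measurableSet_Ioi i_near' i_far',
    setIntegral_congr_fun measurableSet_Ioc h_near, setIntegral_congr_fun measurableSet_Ioi h_far,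
    I_near, I_far]
  ring

lemma abs_mem_Ioo_of_mem_ball_half_abs {x z : ℝ} (hz : z ∈ ball x (|x| / 2)) :
    |x| / 2 < |z| ∧ |z| < 3 * |x| / 2 := by
  rw [mem_ball, Real.dist_eq] at hz
  have h₁ := abs_sub_abs_le_abs_sub x z
  have h₂ := abs_sub_abs_le_abs_sub z x
  rw [abs_sub_comm] at h₁
  constructor <;> linarith

lemma abs_div_sub_le_of_notMem_ball {f : ℝ → ℝ}
    (hf : ∀ y ≠ 0, |f y| ≤ |y| ^ (-(1 : ℝ) / 2)) {x y : ℝ} (hy : y ∉ ball x (|x| / 2))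
    (hy0 : y ≠ 0) :
    |f y / (x - y)| ≤ 3 * (|y| ^ (-(1 : ℝ) / 2) / max |x| |y|) := by
  rw [mem_ball, Real.dist_eq, not_lt, abs_sub_comm] at hy
  have h_max : max |x| |y| ≤ 3 * |x - y| := by
    have := abs_sub_abs_le_abs_sub y x
    rw [abs_sub_comm y x] at this
    exact max_le (by linarith [abs_nonneg (x - y)]) (by linarith [abs_nonneg x])
  have h_max_pos : 0 < max |x| |y| := lt_max_of_lt_right (abs_pos.2 hy0)
  rw [abs_div, mul_div_assoc', div_le_div_iff₀ (by linarith) h_max_pos]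
  calc |f y| * max |x| |y| ≤ |y| ^ (-(1 : ℝ) / 2) * (3 * |x - y|) :=
        mul_le_mul (hf y hy0) h_max h_max_pos.le (by positivity)
    _ = 3 * |y| ^ (-(1 : ℝ) / 2) * |x - y| := by ring

lemma abs_setIntegral_div_sub_le_of_subset_compl_ball {f : ℝ → ℝ}
    (hmeas : AEStronglyMeasurable f volume)
    (hf : ∀ y ≠ 0, |f y| ≤ |y| ^ (-(1 : ℝ) / 2)) {x : ℝ} (hx : x ≠ 0) {s : Set ℝ}
    (hs : MeasurableSet s) (hsub : s ⊆ (ball x (|x| / 2))ᶜ) :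
    IntegrableOn (fun y => f y / (x - y)) s ∧
      |∫ y in s, f y / (x - y)| ≤ 24 * |x| ^ (-(1 : ℝ) / 2) := by
  set g : ℝ → ℝ := fun y => 3 * (|y| ^ (-(1 : ℝ) / 2) / max |x| |y|)
  obtain ⟨hφ, hφ_int⟩ := integral_Ioi_rpow_div_max (abs_pos.2 hx)
  have hg : Integrable g := (integrable_comp_abs hφ).const_mul 3
  have hg_int : ∫ y, g y = 24 * |x| ^ (-(1 : ℝ) / 2) := by
    rw [integral_const_mul, integral_comp_abs (f := fun t => t ^ (-(1 : ℝ) / 2) / max |x| t),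
      hφ_int]
    ring
  have hbound : ∀ᵐ y ∂volume.restrict s, ‖f y / (x - y)‖ ≤ g y := by
    filter_upwards [ae_restrict_mem hs, ae_restrict_of_ae (volume.ae_ne 0)] with y hys hy0
    exact abs_div_sub_le_of_notMem_ball hf (hsub hys) hy0
  have hF_meas : AEStronglyMeasurable (fun y => f y / (x - y)) (volume.restrict s) :=
    hmeas.restrict.div₀ (by fun_prop)
  refine ⟨hg.integrableOn.mono' hF_meas hbound, ?_⟩
  calc |∫ y in s, f y / (x - y)| ≤ ∫ y in s, g y :=
        norm_integral_le_of_norm_le hg.integrableOn hbound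
    _ ≤ ∫ y, g y := setIntegral_le_integral hg (Eventually.of_forall fun y => by positivity)
    _ = 24 * |x| ^ (-(1 : ℝ) / 2) := hg_int

lemma setIntegral_const_div_sub_eq_zero (c x : ℝ) {s : Set ℝ}
    (hs : (fun y => 2 * x - y) ⁻¹' s = s) : ∫ y in s, c / (x - y) = 0 := by
  have h := (volume.measurePreserving_sub_left (2 * x)).setIntegral_preimage_emb
    (Homeomorph.subLeft (2 * x)).measurableEmbedding (fun y => c / (x - y)) s
  rw [hs] at h
  have h_odd : ∫ y in s, c / (x - (2 * x - y)) = -∫ y in s, c / (x - y) := by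
    rw [← integral_neg]
    congr 1 with y
    rw [show x - (2 * x - y) = -(x - y) by ring, div_neg]
  linarith

lemma abs_setIntegral_div_sub_inter_ball_le {f : ℝ → ℝ}
    (hmeas : AEStronglyMeasurable f volume) {x ρ δ K : ℝ} (hρ : 0 < ρ) (hδ : 0 < δ)
    (hdiff : ∀ z ∈ ball x ρ, DifferentiableAt ℝ f z)
    (hK : ∀ z ∈ ball x ρ, |deriv f z| ≤ K) :
    IntegrableOn (fun y => f y / (x - y)) ({y | δ < |x - y|} ∩ ball x ρ) ∧
      |∫ y in {y | δ < |x - y|} ∩ ball x ρ, f y / (x - y)| ≤ 2 * ρ * K := by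
  set N := {y | δ < |x - y|} ∩ ball x ρ
  have hN : MeasurableSet N :=
    (measurableSet_lt measurable_const (by fun_prop)).inter measurableSet_ball
  have hN_fin : volume N < ⊤ := (measure_mono inter_subset_right).trans_lt measure_ball_lt_top
  have hx_ne : ∀ y ∈ N, x - y ≠ 0 := fun y hy h => by
    have := hy.1
    simp only [mem_ofPred_eq, h, abs_zero] at this
    linarith
  have h_quot : ∀ y ∈ N, ‖(f y - f x) / (x - y)‖ ≤ K := fun y hy => by
    have hlip := (convex_ball x ρ).norm_image_sub_le_of_norm_deriv_le hdiff hK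
      (mem_ball_self hρ) hy.2
    rw [Real.norm_eq_abs, abs_div, div_le_iff₀ (abs_pos.2 (hx_ne y hy)), abs_sub_comm x y]
    exact hlip
  have h_const : ∀ y ∈ N, ‖f x / (x - y)‖ ≤ |f x| / δ := fun y hy => by
    rw [Real.norm_eq_abs, abs_div]
    exact div_le_div_of_nonneg_left (abs_nonneg _) hδ hy.1.le
  have i_quot : IntegrableOn (fun y => (f y - f x) / (x - y)) N :=
    Measure.integrableOn_of_bounded hN_fin.ne ((hmeas.sub aestronglyMeasurable_const).div₀
      (by fun_prop)) (ae_restrict_of_forall_mem hN h_quot)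
  have i_const : IntegrableOn (fun y => f x / (x - y)) N :=
    Measure.integrableOn_of_bounded hN_fin.ne (aestronglyMeasurable_const.div₀ (by fun_prop))
      (ae_restrict_of_forall_mem hN h_const)
  have h_split : EqOn (fun y => f y / (x - y))
      (fun y => (f y - f x) / (x - y) + f x / (x - y)) N := fun y _ => by ring
  have h_symm : (fun y => 2 * x - y) ⁻¹' N = N := by
    ext y
    simp only [N, mem_preimage, mem_inter_iff, mem_ofPred_eq, mem_ball, Real.dist_eq]
    rw [show x - (2 * x - y) = y - x by ring, show 2 * x - y - x = x - y by ring,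
      abs_sub_comm y x]
  refine ⟨(i_quot.add i_const).congr_fun h_split.symm hN, ?_⟩
  rw [setIntegral_congr_fun hN h_split, integral_add i_quot i_const,
    setIntegral_const_div_sub_eq_zero _ _ h_symm, add_zero]
  have hK_nonneg : 0 ≤ K := (abs_nonneg _).trans (hK x (mem_ball_self hρ))
  calc |∫ y in N, (f y - f x) / (x - y)| ≤ K * volume.real N :=
        norm_setIntegral_le_of_norm_le_const hN_fin h_quot
    _ ≤ K * volume.real (ball x ρ) := by
        gcongr
        exacts [measure_ball_lt_top.ne, inter_subset_right]
    _ = 2 * ρ * K := by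
        rw [Real.volume_real_ball hρ.le]
        ring

theorem abs_setIntegral_div_sub_le {f : ℝ → ℝ} (hmeas : AEStronglyMeasurable f volume)
    (hf : ∀ y ≠ 0, |f y| ≤ |y| ^ (-(1 : ℝ) / 2)) {x δ K : ℝ} (hx : x ≠ 0)
    (hδ : 0 < δ) (hdiff : ∀ z ∈ ball x (|x| / 2), DifferentiableAt ℝ f z)
    (hK : ∀ z ∈ ball x (|x| / 2), |deriv f z| ≤ K) :
    |∫ y in {y | δ < |x - y|}, f y / (x - y)| ≤ 24 * |x| ^ (-(1 : ℝ) / 2) + |x| * K := by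
  obtain ⟨i_near, h_near⟩ :=
    abs_setIntegral_div_sub_inter_ball_le hmeas (half_pos (abs_pos.2 hx)) hδ hdiff hK
  set S := {y | δ < |x - y|}
  have hS : MeasurableSet S := measurableSet_lt measurable_const (by fun_prop)
  obtain ⟨i_far, h_far⟩ := abs_setIntegral_div_sub_le_of_subset_compl_ball hmeas hf hx
    (hS.diff measurableSet_ball) (fun y hy => hy.2)
  have i_S : IntegrableOn (fun y => f y / (x - y)) S := by
    simpa only [inter_union_sdiff] using i_near.union i_far
  rw [← integral_inter_add_sdiff measurableSet_ball i_S]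
  calc _ ≤ 2 * (|x| / 2) * K + 24 * |x| ^ (-(1 : ℝ) / 2) :=
        (abs_add_le _ _).trans (add_le_add h_near h_far)
    _ = 24 * |x| ^ (-(1 : ℝ) / 2) + |x| * K := by ring

lemma abs_one_div_pi_mul_le (a : ℝ) : |1 / π * a| ≤ |a| := by
  rw [abs_mul, abs_of_pos (by positivity)]
  exact mul_le_of_le_one_left (abs_nonneg a) ((div_le_one pi_pos).2 (by linarith [pi_gt_three]))

/-- Pointwise estimate of the Hilbert transform near the singularity: if
`|f(x)| ≤ |x|^{-1/2}` on `ℝ`, `f` is `C¹` away from `0`, and `|f'(x)| ≤ C|x|^{-3/2}`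
on `[−ε₀, ε₀]`, then `|H(f)(x)| ≤ C₁/√|x|` on `[−ε₀/2, ε₀/2]`, with `C₁`
depending only on `C`. -/
theorem stmt2 (C : ℝ) (hC : 0 < C) :
    ∃ C₁ : ℝ, 0 < C₁ ∧
      ∀ (f : ℝ → ℝ) (ε₀ : ℝ), 0 < ε₀ →
        (∀ ε > 0, ContDiffOn ℝ 1 f {x : ℝ | ε < |x|}) →
        (∀ x : ℝ, x ≠ 0 → |f x| ≤ |x| ^ (-(1 : ℝ) / 2)) →
        (∀ x ∈ Icc (-ε₀) ε₀, x ≠ 0 → |deriv f x| ≤ C * |x| ^ (-(3 : ℝ) / 2)) →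
        ∀ x ∈ Icc (-(ε₀ / 2)) (ε₀ / 2), x ≠ 0 →
          ∀ L : ℝ, HilbertAt f x L → |L| ≤ C₁ / Real.sqrt |x| := by
  refine ⟨24 + 2 ^ ((3 : ℝ) / 2) * C, by positivity, ?_⟩
  intro f ε₀ _ hsm hf hf' x hx hx0 L hL
  have hf_reg : ∀ y ≠ 0, ContDiffAt ℝ 1 f y := fun y hy =>
    contDiffAt_of_contDiffOn_abs_gt hsm hy
  have hball : ∀ z ∈ ball x (|x| / 2),
      z ≠ 0 ∧ |deriv f z| ≤ C * (|x| / 2) ^ (-(3 : ℝ) / 2) := by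
    intro z hz
    obtain ⟨hz_low, hz_up⟩ := abs_mem_Ioo_of_mem_ball_half_abs hz
    have hz0 : z ≠ 0 := abs_pos.1 (by linarith [abs_nonneg x])
    have hx_le : |x| ≤ ε₀ / 2 := abs_le.2 hx
    refine ⟨hz0, (hf' z (abs_le.1 (by linarith)) hz0).trans ?_⟩
    exact mul_le_mul_of_nonneg_left
      (rpow_le_rpow_of_nonpos (by linarith [abs_pos.2 hx0]) hz_low.le (by norm_num)) hC.le
  have h_scale : |x| * (C * (|x| / 2) ^ (-(3 : ℝ) / 2))
      = 2 ^ ((3 : ℝ) / 2) * C * |x| ^ (-(1 : ℝ) / 2) := by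
    rw [show -(1 : ℝ) / 2 = -(3 : ℝ) / 2 + 1 by norm_num, rpow_add_one (abs_ne_zero.2 hx0),
      div_rpow (abs_nonneg x) zero_le_two, show -(3 : ℝ) / 2 = -((3 : ℝ) / 2) by ring,
      rpow_neg zero_le_two]
    field_simp
  have h_sqrt : |x| ^ (-(1 : ℝ) / 2) = (√|x|)⁻¹ := by
    rw [show -(1 : ℝ) / 2 = -(1 / 2) by ring, rpow_neg (abs_nonneg x), sqrt_eq_rpow]
  refine le_of_tendsto hL.abs (eventually_nhdsWithin_of_forall fun δ (hδ : 0 < δ) => ?_)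
  calc _ ≤ |∫ y in {y : ℝ | δ < |x - y|}, f y / (x - y)| := abs_one_div_pi_mul_le _
    _ ≤ 24 * |x| ^ (-(1 : ℝ) / 2) + |x| * (C * (|x| / 2) ^ (-(3 : ℝ) / 2)) :=
        abs_setIntegral_div_sub_le (aestronglyMeasurable_of_continuousAt_of_ne_zero
            fun y hy => (hf_reg y hy).continuousAt) hf hx0 hδ
          (fun z hz => (hf_reg z (hball z hz).1).differentiableAt one_ne_zero)
          (fun z hz => (hball z hz).2)
    _ = (24 + 2 ^ ((3 : ℝ) / 2) * C) / √|x| := by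
        rw [h_scale, h_sqrt]
        ring
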